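/- In the 2-CSP-to-4-CSP construction: if there exists an assignment ψ : V → Σ with val_G(ψ) = 1, then val_{G'}(ψ'^ini ↭ ψ'^tar) = 1. -/

import Mathlib

/-- Two assignments differ on at most one vertex. -/
def adjOne {V A : Type*} (ψ φ : V → A) : Prop := ∃ v0, ∀ v, v ≠ v0 → ψ v = φ v

/-- Value of an assignment: the fraction of constraints (indexed by `ι`, with multiplicity)
that it satisfies. -/
noncomputable def valC {V A ι : Type*} [Fintype ι] (sat : ι → (V → A) → Prop)
    (ψ : V → A) : ℝ :=
  (Nat.card {i : ι // sat i ψ} : ℝ) / (Fintype.card ι : ℝ)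

/-- The minimum value along a sequence of assignments. -/
noncomputable def valSeqC {V A ι : Type*} [Fintype ι] (sat : ι → (V → A) → Prop)
    (l : List (V → A)) : ℝ :=
  (l.map (valC sat)).foldr min 1

/-- `maxValC sat ψi ψt` is the maximum, over all reconfiguration sequences from `ψi` to `ψt`
(finite sequences of assignments starting at `ψi`, ending at `ψt`, consecutive assignments
differing on at most one vertex), of the minimum value along the sequence. -/
noncomputable def maxValC {V A ι : Type*} [Fintype ι] (sat : ι → (V → A) → Prop)
    (ψi ψt : V → A) : ℝ :=
  sSup {r : ℝ | ∃ l : List (V → A), l ≠ [] ∧ l.head? = some ψi ∧ l.getLast? = some ψt ∧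
    l.Chain' adjOne ∧ r = valSeqC sat l}

/-!
Walk from the constant-`a` assignment to the constant-`b` one in three monotone phases:
first move the vertices of `G` to a satisfying assignment `ψ` (while `x = y = a`), then move
`x` and `y` to `b` (while `ψ` satisfies every constraint of `G`), then move the vertices of `G`
to `b` (while `x = y = b`). Every assignment met on the way satisfies all hyperedges of `G'`.
-/

open Relation

section Value

variable {V A ι : Type*} [Fintype ι] {sat : ι → (V → A) → Prop}

theorem valC_eq_one_iff {ψ : V → A} : valC sat ψ = 1 ↔ Nonempty ι ∧ ∀ i, sat i ψ := by
  classical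
  rcases isEmpty_or_nonempty ι with hι | hι
  · simpa [valC]
  · have hcard : (Fintype.card ι : ℝ) ≠ 0 := by exact_mod_cast Fintype.card_ne_zero
    rw [valC, div_eq_one_iff_eq hcard, Nat.card_eq_fintype_card, Nat.cast_inj,
      Fintype.card_subtype, ← Finset.card_univ, Finset.card_filter_eq_iff]
    simp [hι]

theorem valSeqC_le_one (l : List (V → A)) : valSeqC sat l ≤ 1 := by
  induction l with
  | nil => rfl
  | cons φ l ih => exact (min_le_right _ _).trans ih

theorem valSeqC_eq_one {l : List (V → A)} (h : ∀ φ ∈ l, valC sat φ = 1) :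
    valSeqC sat l = 1 := by
  induction l with
  | nil => rfl
  | cons φ l ih =>
    simp only [List.forall_mem_cons] at h
    simp only [valSeqC, List.map_cons, List.foldr_cons] at ih ⊢
    rw [h.1, ih h.2, min_self]

end Value

section Reconfiguration

variable {V A : Type*}

theorem exists_chain_of_reflTransGen {P : (V → A) → Prop} {φ ψ : V → A} (hφ : P φ)
    (h : ReflTransGen (fun f g => adjOne f g ∧ P g) φ ψ) :
    ∃ l : List (V → A), l ≠ [] ∧ l.head? = some φ ∧ l.getLast? = some ψ ∧
      l.IsChain adjOne ∧ ∀ f ∈ l, P f := by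
  induction h using ReflTransGen.head_induction_on with
  | refl => exact ⟨[ψ], by simp, rfl, rfl, .singleton _, by simpa⟩
  | head hstep _ ih =>
    obtain ⟨l, hne, hhead, hlast, hchain, hP⟩ := ih hstep.2
    refine ⟨_ :: l, by simp, rfl, ?_, hchain.cons ?_, List.forall_mem_cons.2 ⟨hφ, hP⟩⟩
    · rwa [List.getLast?_cons_of_ne_nil hne]
    · rintro g hg
      rw [hhead, Option.mem_some_iff] at hg
      exact hg ▸ hstep.1

theorem reflTransGen_of_forall_between [Finite V] {P : (V → A) → Prop} {φ ψ : V → A}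
    (h : ∀ g : V → A, (∀ v, g v = φ v ∨ g v = ψ v) → P g) :
    ReflTransGen (fun f g => adjOne f g ∧ P g) φ ψ := by
  classical
  have := Fintype.ofFinite V
  suffices key : ∀ (s : Finset V) (φ : V → A), (∀ v ∉ s, φ v = ψ v) →
      (∀ g : V → A, (∀ v, g v = φ v ∨ g v = ψ v) → P g) →
      ReflTransGen (fun f g => adjOne f g ∧ P g) φ ψ from
    key Finset.univ φ (by simp) h
  intro s
  induction s using Finset.induction_on with
  | empty =>
    intro φ hφ _
    rw [funext fun v => hφ v (Finset.notMem_empty v)]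
  | insert v s _ ih =>
    intro φ hφ hbetween
    set φ' := Function.update φ v (ψ v)
    have hφ' : ∀ g : V → A, (∀ w, g w = φ' w ∨ g w = ψ w) → P g := by
      refine fun g hg => hbetween g fun w => ?_
      rcases eq_or_ne w v with rfl | hw
      · exact .inr (by simpa [φ'] using hg w)
      · simpa [φ', hw] using hg w
    refine ReflTransGen.head ⟨⟨v, fun w hw => ?_⟩, hφ' φ' fun _ => .inl rfl⟩ (ih φ' ?_ hφ')
    · simp [φ', hw]
    · intro w hw
      rcases eq_or_ne w v with rfl | hwv
      · simp [φ']
      · simpa [φ', hwv] using hφ w (by simp [hwv, hw])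

end Reconfiguration

theorem maxValC_eq_one_of_reflTransGen {V A ι : Type*} [Fintype ι] [Nonempty ι]
    {sat : ι → (V → A) → Prop} {φ ψ : V → A} (hφ : ∀ i, sat i φ)
    (h : ReflTransGen (fun f g => adjOne f g ∧ ∀ i, sat i g) φ ψ) :
    maxValC sat φ ψ = 1 := by
  obtain ⟨l, hne, hhead, hlast, hchain, hsat⟩ := exists_chain_of_reflTransGen hφ h
  refine IsGreatest.csSup_eq ⟨⟨l, hne, hhead, hlast, hchain, ?_⟩, ?_⟩
  · exact (valSeqC_eq_one fun f hf => valC_eq_one_iff.2 ⟨‹_›, hsat f hf⟩).symm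
  · rintro r ⟨l', -, -, -, -, rfl⟩
    exact valSeqC_le_one l'

theorem two_to_four_completeness_general {V A ι : Type*} [Fintype V]
    [Fintype ι]
    (he : ι → V × V) (hc : ι → Set (A × A)) (a b : A)
    (h : ∃ ψ : V → A, valC (fun i ψ => (ψ (he i).1, ψ (he i).2) ∈ hc i) ψ = 1) :
    maxValC (fun i : ι => fun ψ' : (V ⊕ Fin 2) → A =>
        (ψ' (Sum.inl (he i).1), ψ' (Sum.inl (he i).2)) ∈ hc i ∨
          ψ' (Sum.inr 0) = ψ' (Sum.inr 1))
      (fun _ => a) (fun _ => b) = 1 := by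
  obtain ⟨ψ, hψ⟩ := h
  obtain ⟨_, hψ⟩ := valC_eq_one_iff.1 hψ
  refine maxValC_eq_one_of_reflTransGen (fun _ => .inr rfl) <|
    (ReflTransGen.trans (b := Sum.elim ψ fun _ => a) ?to_ψ <|
      ReflTransGen.trans (b := Sum.elim ψ fun _ => b) ?flip ?to_b)
  case to_ψ =>
    refine reflTransGen_of_forall_between fun g hg i => .inr ?_
    exact ((hg (.inr 0)).elim id id).trans ((hg (.inr 1)).elim id id).symm
  case flip =>
    refine reflTransGen_of_forall_between fun g hg i => .inl ?_
    have hV : ∀ v, g (.inl v) = ψ v := fun v => (hg (.inl v)).elim id id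
    simpa only [hV] using hψ i
  case to_b =>
    refine reflTransGen_of_forall_between fun g hg i => .inr ?_
    exact ((hg (.inr 0)).elim id id).trans ((hg (.inr 1)).elim id id).symm

/-- completeness of the 2-CSP-to-4-CSP construction.  Given a binary
constraint graph (edges indexed by nonempty `ι`, endpoints `he`, constraints `hc`),
distinct values `a ≠ b`, and fresh vertices `x = inr 0`, `y = inr 1`, the 4-ary graph `G'`
has one hyperedge `(v, w, x, y)` per edge `(v, w)`, satisfied iff the original constraint
holds or `x` and `y` take the same value.  If some assignment satisfies all edges of `G`,
then `val_{G'}(ψ'ᵢₙᵢ ↭ ψ'ₜₐᵣ) = 1` for the constant-`a` and constant-`b` assignments. -/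
theorem two_to_four_completeness {V A ι : Type*} [Fintype V] [Fintype A]
    [Fintype ι] [Nonempty ι]
    (he : ι → V × V) (hc : ι → Set (A × A)) (a b : A) (hab : a ≠ b)
    (h : ∃ ψ : V → A, valC (fun i ψ => (ψ (he i).1, ψ (he i).2) ∈ hc i) ψ = 1) :
    maxValC (fun i : ι => fun ψ' : (V ⊕ Fin 2) → A =>
        (ψ' (Sum.inl (he i).1), ψ' (Sum.inl (he i).2)) ∈ hc i ∨
          ψ' (Sum.inr 0) = ψ' (Sum.inr 1))
      (fun _ => a) (fun _ => b) = 1 :=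
  two_to_four_completeness_general he hc a b h
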